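/- arXiv:1512.07586 — 3 statements merged into one kernel-verified Lean document; each statement's English description precedes it below -/
import Mathlib

section
/- If S is a generating set of a commutative monoid P and F is a face of P (a submonoid whose complement is an ideal), then S ∩ F generates F. In particular, every face of a finitely generated monoid is finitely generated. -/
namespace AddSubmonoid

theorem closure_inter_eq_closure_inf_of_face {P : Type*} [AddMonoid P] (S : Set P)
    {F : AddSubmonoid P} (hF : ∀ p q : P, p + q ∈ F → p ∈ F ∧ q ∈ F) :
    closure (S ∩ F) = closure S ⊓ F := by
  refine le_antisymm
    (le_inf (closure_mono Set.inter_subset_left) (closure_le.mpr Set.inter_subset_right)) ?_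
  rintro p ⟨hpS, hpF⟩
  induction hpS using closure_induction with
  | mem x hx => exact subset_closure ⟨hx, hpF⟩
  | zero => exact zero_mem _
  | add x y _ _ hx hy => exact add_mem (hx (hF x y hpF).1) (hy (hF x y hpF).2)

end AddSubmonoid

/-- If `S` generates a commutative monoid `P` and `F` is a face of `P`
(a submonoid such that `p + q ∈ F` implies `p ∈ F` and `q ∈ F`), then
`S ∩ F` generates `F`; in particular every face of a finitely generated
monoid is finitely generated. -/
theorem stmt0 {P : Type*} [AddCommMonoid P] (S : Set P)
    (hS : AddSubmonoid.closure S = ⊤) (F : AddSubmonoid P)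
    (hF : ∀ p q : P, p + q ∈ F → p ∈ F ∧ q ∈ F) :
    AddSubmonoid.closure (S ∩ (F : Set P)) = F ∧ (S.Finite → F.FG) := by
  have hclosure : AddSubmonoid.closure (S ∩ (F : Set P)) = F := by
    rw [AddSubmonoid.closure_inter_eq_closure_inf_of_face S hF, hS, top_inf_eq]
  exact ⟨hclosure, fun hfin => (F.fg_iff).mpr ⟨_, hclosure, hfin.inter_of_left _⟩⟩
end

section
/- For a finitely generated commutative monoid P, the set of faces of P is finite. -/
/-! A face `F` is generated by the generators of `P` that it contains: writing an element of `F`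
as a sum of generators, the face property puts every summand in `F`. So a face is determined by
a subset of a finite generating set. -/

namespace AddSubmonoid

variable {P : Type*} [AddCommMonoid P]

def IsFace (F : AddSubmonoid P) : Prop :=
  ∀ p q : P, p + q ∈ F → p ∈ F ∧ q ∈ F

theorem IsFace.closure_inter_eq {F : AddSubmonoid P} (hF : F.IsFace) {S : Set P}
    (hS : closure S = ⊤) : closure (S ∩ F) = F := by
  refine le_antisymm (closure_le.mpr Set.inter_subset_right) fun x hxF => ?_
  have hxS : x ∈ closure S := hS ▸ mem_top x
  revert hxF
  induction hxS using closure_induction with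
  | mem s hs => exact fun hsF => subset_closure ⟨hs, hsF⟩
  | zero => exact fun _ => zero_mem _
  | add a b _ _ ha hb =>
    intro hab
    obtain ⟨haF, hbF⟩ := hF a b hab
    exact add_mem (ha haF) (hb hbF)

theorem injOn_inter_setOf_isFace {S : Set P} (hS : closure S = ⊤) :
    Set.InjOn (fun F : AddSubmonoid P => S ∩ F) {F | F.IsFace} := fun F hF G hG h => by
  rw [← hF.closure_inter_eq hS, ← hG.closure_inter_eq hS]
  exact congrArg closure h

theorem finite_setOf_isFace [AddMonoid.FG P] : {F : AddSubmonoid P | F.IsFace}.Finite := by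
  obtain ⟨S, hS⟩ := (AddMonoid.fg_def.mp ‹_› : (⊤ : AddSubmonoid P).FG)
  refine Set.Finite.of_finite_image ?_ (injOn_inter_setOf_isFace hS)
  refine S.finite_toSet.finite_subsets.subset ?_
  rintro _ ⟨F, -, rfl⟩
  exact Set.inter_subset_left

end AddSubmonoid

/-- For a finitely generated commutative monoid `P`, the set of faces of `P`
(submonoids `F` such that `p + q ∈ F` implies `p ∈ F` and `q ∈ F`) is finite. -/
theorem stmt1 {P : Type*} [AddCommMonoid P] [AddMonoid.FG P] :
    {F : AddSubmonoid P | ∀ p q : P, p + q ∈ F → p ∈ F ∧ q ∈ F}.Finite :=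
  AddSubmonoid.finite_setOf_isFace
end

section
/- Let f : N → N' be a homomorphism of finitely generated abelian groups with torsion-free kernel, and let F ≤ N and F' ≤ N' be subgroups such that f restricts to a bijection F → F'. Then the induced map N/F → N'/F' is injective on torsion subgroups. -/
/-!
If `n + F` is torsion and `f n ∈ F' = f(F)`, pick `m ∈ F` with `f m = f n`. Some multiple
`k • (n - m)` lies in `F` and is killed by `f`, so it vanishes by injectivity of `f` on `F`.
Hence `n - m` is a torsion element of `ker f`, so `n = m ∈ F`.
-/

section

variable {N N' : Type*} [AddCommGroup N] [AddGroup N'] {f : N →+ N'} {F : AddSubgroup N}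

lemma isOfFinAddOrder_sub_of_injOn (hinj : Set.InjOn f (F : Set N)) {n m : N}
    (hn : IsOfFinAddOrder (n : N ⧸ F)) (hm : m ∈ F) (hfm : f m = f n) :
    IsOfFinAddOrder (n - m) := by
  obtain ⟨k, hk, hkn⟩ := isOfFinAddOrder_iff_nsmul_eq_zero.mp hn
  rw [← QuotientAddGroup.mk_nsmul, QuotientAddGroup.eq_zero_iff] at hkn
  have hmem : k • (n - m) ∈ F := by
    rw [smul_sub]
    exact F.sub_mem hkn (F.nsmul_mem hm k)
  have hker : f (k • (n - m)) = f 0 := by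
    rw [map_nsmul, map_sub, hfm, sub_self, smul_zero, map_zero]
  exact isOfFinAddOrder_iff_nsmul_eq_zero.mpr ⟨k, hk, hinj hmem F.zero_mem hker⟩

end

theorem stmt5_general {N N' : Type*} [AddCommGroup N]
    [AddCommGroup N'] (f : N →+ N')
    (hker : ∀ x : N, f x = 0 → IsOfFinAddOrder x → x = 0)
    (F : AddSubgroup N) (F' : AddSubgroup N')
    (hmap : AddSubgroup.map f F = F') (hinj : Set.InjOn f (F : Set N))
    (hle : F ≤ AddSubgroup.comap f F') :
    ∀ x : N ⧸ F, IsOfFinAddOrder x →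
      QuotientAddGroup.map F F' f hle x = 0 → x = 0 := by
  intro x hx h0
  induction x using QuotientAddGroup.induction_on with | H n => ?_
  have hfn : f n ∈ AddSubgroup.map f F := by
    rwa [hmap, ← QuotientAddGroup.eq_zero_iff, ← QuotientAddGroup.map_mk F F' f hle]
  obtain ⟨m, hm, hfm⟩ := hfn
  have hnm : n - m = 0 :=
    hker _ (by rw [map_sub, hfm, sub_self]) (isOfFinAddOrder_sub_of_injOn hinj hx hm hfm)
  rw [sub_eq_zero] at hnm
  rw [QuotientAddGroup.eq_zero_iff, hnm]
  exact hm

/-- Let `f : N → N'` be a homomorphism of finitely generated abelian groups with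
torsion-free kernel, and let `F ≤ N`, `F' ≤ N'` be subgroups such that `f`
restricts to a bijection `F → F'`.  Then the induced map `N/F → N'/F'` is
injective on torsion elements. -/
theorem stmt5 {N N' : Type*} [AddCommGroup N] [AddGroup.FG N]
    [AddCommGroup N'] [AddGroup.FG N'] (f : N →+ N')
    (hker : ∀ x : N, f x = 0 → IsOfFinAddOrder x → x = 0)
    (F : AddSubgroup N) (F' : AddSubgroup N')
    (hmap : AddSubgroup.map f F = F') (hinj : Set.InjOn f (F : Set N))
    (hle : F ≤ AddSubgroup.comap f F') :
    ∀ x : N ⧸ F, IsOfFinAddOrder x →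
      QuotientAddGroup.map F F' f hle x = 0 → x = 0 :=
  stmt5_general f hker F F' hmap hinj hle
end
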